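/- arXiv:0808.3424 — 3 statements merged into one kernel-verified Lean document; each statement's English description precedes it below -/
import Mathlib

section
/- Let G be a partially ordered abelian group with order unit u, and D a dense subgroup of ℝ containing 1 (with the order inherited from ℝ). If D has a unique state (with order unit 1), then the map λ from the state space S_{u⊗1}(G ⊗ D) to S_u(G), defined by λ(s)(x) = s(x ⊗ 1), is an affine bijection. -/
/-- A state on a partially ordered abelian group with positive cone `P` and order unit
`u` is a positive additive homomorphism into `ℝ` normalized at `u`. -/
def IsState {G : Type*} [AddCommGroup G] (P : Set G) (u : G) (s : G →+ ℝ) : Prop :=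
  (∀ x ∈ P, 0 ≤ s x) ∧ s u = 1

/-- The tensor product `s₁ ⊗ s₂ : G ⊗ H → ℝ` of two real-valued additive maps. -/
noncomputable def tensorState {G H : Type*} [AddCommGroup G] [AddCommGroup H]
    (s : G →+ ℝ) (t : H →+ ℝ) : TensorProduct ℤ G H →+ ℝ :=
  ((LinearMap.mul' ℤ ℝ).comp
    (TensorProduct.map s.toIntLinearMap t.toIntLinearMap)).toAddMonoidHom

/-- The positive cone on `G ⊗ H`: `{0}` together with the elements on which every
tensor product of states is strictly positive. -/
def tensorCone {G H : Type*} [AddCommGroup G] [AddCommGroup H]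
    (P : Set G) (u : G) (Q : Set H) (v : H) : Set (TensorProduct ℤ G H) :=
  {0} ∪ {x | ∀ s t, IsState P u s → IsState Q v t → 0 < tensorState s t x}

lemma tensorState_tmul {G H : Type*} [AddCommGroup G] [AddCommGroup H]
    (s : G →+ ℝ) (t : H →+ ℝ) (x : G) (y : H) :
    tensorState s t (x ⊗ₜ[ℤ] y) = s x * t y := by
  simp [tensorState]

lemma subtype_isState (D : AddSubgroup ℝ) (h1 : (1:ℝ) ∈ D) :
    IsState {x : D | 0 ≤ (x : ℝ)} ⟨1, h1⟩ D.subtype :=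
  ⟨fun _ hx => hx, rfl⟩

lemma state_eq_subtype (D : AddSubgroup ℝ) (h1 : (1:ℝ) ∈ D)
    (hDstate : ∃! t : D →+ ℝ, IsState {x : D | 0 ≤ (x : ℝ)} ⟨1, h1⟩ t)
    (t : D →+ ℝ) (ht : IsState {x : D | 0 ≤ (x : ℝ)} ⟨1, h1⟩ t) :
    t = D.subtype := by
  obtain ⟨t₀, _, huniq⟩ := hDstate
  rw [huniq t ht, huniq D.subtype (subtype_isState D h1)]

lemma key_linear (D : AddSubgroup ℝ) (h1 : (1:ℝ) ∈ D)
    (hDstate : ∃! t : D →+ ℝ, IsState {x : D | 0 ≤ (x : ℝ)} ⟨1, h1⟩ t)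
    (ψ : D →+ ℝ) (hpos : ∀ d : D, 0 ≤ (d:ℝ) → 0 ≤ ψ d)
    (hψ1 : 0 < ψ ⟨1, h1⟩) (d : D) : ψ d = ψ ⟨1, h1⟩ * d := by
  set c := ψ ⟨1, h1⟩ with hc
  set φ : D →+ ℝ := AddMonoidHom.mk' (fun d => c⁻¹ * ψ d)
    (by intro a b; show c⁻¹ * ψ (a+b) = c⁻¹ * ψ a + c⁻¹ * ψ b;
        rw [map_add]; ring) with hφdef
  have hφ : IsState {x : D | 0 ≤ (x : ℝ)} ⟨1, h1⟩ φ := by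
    constructor
    · intro x hx
      exact mul_nonneg (inv_nonneg.2 hψ1.le) (hpos x hx)
    · show c⁻¹ * ψ ⟨1, h1⟩ = 1
      rw [← hc]; field_simp
  have heq := state_eq_subtype D h1 hDstate φ hφ
  have h2 : c⁻¹ * ψ d = (d : ℝ) := DFunLike.congr_fun heq d
  calc ψ d = c * (c⁻¹ * ψ d) := by field_simp
    _ = c * d := by rw [h2]

/-- Let `G` be a partially ordered abelian group with order unit `u`, and `D` a dense
subgroup of `ℝ` containing `1`, with the inherited order.  If `D` has a unique state,
then the map `λ` from `S_{u⊗1}(G ⊗ D)` to `S_u(G)` defined by `λ(s)(x) = s(x ⊗ 1)` is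
an affine bijection. -/
theorem stmt_3 {G : Type*} [AddCommGroup G] (P : Set G) (u : G)
    (hP0 : (0 : G) ∈ P) (hPadd : ∀ x ∈ P, ∀ y ∈ P, x + y ∈ P)
    (hPpointed : ∀ x ∈ P, -x ∈ P → x = 0)
    (huP : u ∈ P) (hu : ∀ g : G, ∃ n : ℕ, n • u - g ∈ P)
    (D : AddSubgroup ℝ) (hD : Dense (D : Set ℝ)) (h1 : (1 : ℝ) ∈ D)
    (hDstate : ∃! t : D →+ ℝ, IsState {x : D | 0 ≤ (x : ℝ)} ⟨1, h1⟩ t)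
    -- the restriction map λ
    (lam : (TensorProduct ℤ G D →+ ℝ) → (G →+ ℝ))
    (hlam : ∀ s x, lam s x = s (x ⊗ₜ[ℤ] (⟨1, h1⟩ : D))) :
    -- λ maps states to states
    (∀ s, IsState (tensorCone P u {x : D | 0 ≤ (x : ℝ)} ⟨1, h1⟩)
        (u ⊗ₜ[ℤ] (⟨1, h1⟩ : D)) s → IsState P u (lam s)) ∧
    -- λ is injective on states
    (∀ s s', IsState (tensorCone P u {x : D | 0 ≤ (x : ℝ)} ⟨1, h1⟩)
        (u ⊗ₜ[ℤ] (⟨1, h1⟩ : D)) s →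
      IsState (tensorCone P u {x : D | 0 ≤ (x : ℝ)} ⟨1, h1⟩)
        (u ⊗ₜ[ℤ] (⟨1, h1⟩ : D)) s' → lam s = lam s' → s = s') ∧
    -- λ is surjective onto the states of G
    (∀ t : G →+ ℝ, IsState P u t → ∃ s, IsState (tensorCone P u {x : D | 0 ≤ (x : ℝ)} ⟨1, h1⟩)
        (u ⊗ₜ[ℤ] (⟨1, h1⟩ : D)) s ∧ lam s = t) ∧
    -- λ is affine: it preserves convex combinations of states
    (∀ s₁ s₂ s₃, IsState (tensorCone P u {x : D | 0 ≤ (x : ℝ)} ⟨1, h1⟩)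
        (u ⊗ₜ[ℤ] (⟨1, h1⟩ : D)) s₁ →
      IsState (tensorCone P u {x : D | 0 ≤ (x : ℝ)} ⟨1, h1⟩)
        (u ⊗ₜ[ℤ] (⟨1, h1⟩ : D)) s₂ →
      IsState (tensorCone P u {x : D | 0 ≤ (x : ℝ)} ⟨1, h1⟩)
        (u ⊗ₜ[ℤ] (⟨1, h1⟩ : D)) s₃ →
      ∀ c : ℝ, 0 ≤ c → c ≤ 1 → (∀ x, s₃ x = c * s₁ x + (1 - c) * s₂ x) →
        ∀ g : G, lam s₃ g = c * lam s₁ g + (1 - c) * lam s₂ g) := by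
  set v : D := ⟨1, h1⟩ with hv
  set Q : Set D := {x : D | 0 ≤ (x : ℝ)} with hQ
  set cone := tensorCone P u Q v with hcone
  -- values of states on D
  have hDval : ∀ t : D →+ ℝ, IsState Q v t → ∀ d : D, t d = d := by
    intro t ht d
    rw [state_eq_subtype D h1 hDstate t ht]
    rfl
  -- membership in the cone of perturbed pure tensors, for x ∈ P and d > 0
  have hmemA : ∀ x ∈ P, ∀ d : D, 0 < (d : ℝ) →
      x ⊗ₜ[ℤ] v + u ⊗ₜ[ℤ] d ∈ cone := by
    intro x hx d hd
    refine Or.inr ?_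
    intro s₁ t₁ hs₁ ht₁
    rw [map_add, tensorState_tmul, tensorState_tmul, hDval t₁ ht₁,
      hDval t₁ ht₁, hs₁.2]
    have hx1 : 0 ≤ s₁ x := hs₁.1 x hx
    have : (v : ℝ) = 1 := rfl
    rw [this]
    nlinarith
  have hmemB : ∀ x ∈ P, ∀ d : D, 0 < (d : ℝ) →
      (x + u) ⊗ₜ[ℤ] d ∈ cone := by
    intro x hx d hd
    refine Or.inr ?_
    intro s₁ t₁ hs₁ ht₁
    rw [tensorState_tmul, hDval t₁ ht₁, map_add, hs₁.2]
    have hx1 : 0 ≤ s₁ x := hs₁.1 x hx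
    nlinarith
  -- main analysis of a state on the tensor product
  have main : ∀ s : TensorProduct ℤ G D →+ ℝ, IsState cone (u ⊗ₜ[ℤ] v) s →
      IsState P u (lam s) ∧ (∀ g : G, ∀ d : D, s (g ⊗ₜ[ℤ] d) = s (g ⊗ₜ[ℤ] v) * d) := by
    intro s hs
    -- s(u ⊗ d) = d
    have hA : ∀ d : D, s (u ⊗ₜ[ℤ] d) = d := by
      set ψ : D →+ ℝ := AddMonoidHom.mk' (fun d => s (u ⊗ₜ[ℤ] d))
        (by intro a b
            show s (u ⊗ₜ[ℤ] (a+b)) = s (u ⊗ₜ[ℤ] a) + s (u ⊗ₜ[ℤ] b)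
            rw [TensorProduct.tmul_add, map_add]) with hψ
      have hpos : ∀ d : D, 0 ≤ (d : ℝ) → 0 ≤ ψ d := by
        intro d hd
        rcases hd.lt_or_eq with hd' | hd'
        · have hc := hmemB 0 hP0 d hd'
          rw [zero_add] at hc
          exact hs.1 _ hc
        · have : d = 0 := by ext; exact hd'.symm
          show (0:ℝ) ≤ s (u ⊗ₜ[ℤ] d)
          rw [this, TensorProduct.tmul_zero, map_zero]
      have hψ1 : 0 < ψ v := by
        show (0:ℝ) < s (u ⊗ₜ[ℤ] v); rw [hs.2]; norm_num
      intro d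
      have hk := key_linear D h1 hDstate ψ hpos hψ1 d
      have hv1 : ψ v = 1 := hs.2
      rw [hv1, one_mul] at hk
      exact hk
    -- s(x ⊗ v) ≥ 0 for x ∈ P
    have hBx : ∀ x ∈ P, 0 ≤ s (x ⊗ₜ[ℤ] v) := by
      intro x hx
      by_contra hcon
      push_neg at hcon
      obtain ⟨d, hdD, hd'⟩ := hD.exists_between (by linarith : (0:ℝ) < -s (x ⊗ₜ[ℤ] v))
      have hm := hs.1 _ (hmemA x hx ⟨d, hdD⟩ hd'.1)
      rw [map_add, hA] at hm
      have : ((⟨d, hdD⟩ : D) : ℝ) = d := rfl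
      rw [this] at hm
      linarith [hd'.2]
    -- the map d ↦ s((x+u) ⊗ d) for x ∈ P is linear
    have hlin : ∀ x ∈ P, ∀ d : D, s ((x + u) ⊗ₜ[ℤ] d) = s ((x + u) ⊗ₜ[ℤ] v) * d := by
      intro x hx
      set ψ : D →+ ℝ := AddMonoidHom.mk' (fun d => s ((x + u) ⊗ₜ[ℤ] d))
        (by intro a b
            show s ((x+u) ⊗ₜ[ℤ] (a+b)) = s ((x+u) ⊗ₜ[ℤ] a) + s ((x+u) ⊗ₜ[ℤ] b)
            rw [TensorProduct.tmul_add, map_add]) with hψ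
      have hpos : ∀ d : D, 0 ≤ (d : ℝ) → 0 ≤ ψ d := by
        intro d hd
        rcases hd.lt_or_eq with hd' | hd'
        · exact hs.1 _ (hmemB x hx d hd')
        · have : d = 0 := by ext; exact hd'.symm
          show (0:ℝ) ≤ s ((x+u) ⊗ₜ[ℤ] d)
          rw [this, TensorProduct.tmul_zero, map_zero]
      have hψ1 : 0 < ψ v := by
        show (0:ℝ) < s ((x+u) ⊗ₜ[ℤ] v)
        have h3 : s ((x + u) ⊗ₜ[ℤ] v) = s (x ⊗ₜ[ℤ] v) + 1 := by
          rw [TensorProduct.add_tmul, map_add, hs.2]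
        have := hBx x hx
        linarith
      intro d
      exact key_linear D h1 hDstate ψ hpos hψ1 d
    -- linearity in d for all g
    have hCall : ∀ g : G, ∀ d : D, s (g ⊗ₜ[ℤ] d) = s (g ⊗ₜ[ℤ] v) * d := by
      have hCP : ∀ x ∈ P, ∀ d : D, s (x ⊗ₜ[ℤ] d) = s (x ⊗ₜ[ℤ] v) * d := by
        intro x hx d
        have h1' := hlin x hx d
        have h2 : s ((x + u) ⊗ₜ[ℤ] d) = s (x ⊗ₜ[ℤ] d) + s (u ⊗ₜ[ℤ] d) := by
          rw [TensorProduct.add_tmul, map_add]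
        have h3 : s ((x + u) ⊗ₜ[ℤ] v) = s (x ⊗ₜ[ℤ] v) + 1 := by
          rw [TensorProduct.add_tmul, map_add, hs.2]
        rw [h2, h3, hA] at h1'
        linarith [h1']
      have hnP : ∀ n : ℕ, (n • u : G) ∈ P := by
        intro n
        induction n with
        | zero => simpa using hP0
        | succ n ih => rw [succ_nsmul]; exact hPadd _ ih _ huP
      intro g d
      obtain ⟨n, hn⟩ := hu g
      have hdec : g ⊗ₜ[ℤ] d = (n • u) ⊗ₜ[ℤ] d - (n • u - g) ⊗ₜ[ℤ] d := by
        rw [← TensorProduct.sub_tmul, sub_sub_cancel]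
      have hdecv : g ⊗ₜ[ℤ] v = (n • u) ⊗ₜ[ℤ] v - (n • u - g) ⊗ₜ[ℤ] v := by
        rw [← TensorProduct.sub_tmul, sub_sub_cancel]
      rw [hdec, hdecv, map_sub, map_sub, hCP _ (hnP n), hCP _ hn,
        hCP _ (hnP n), hCP _ hn]
      ring
    refine ⟨⟨?_, ?_⟩, hCall⟩
    · intro x hx; rw [hlam]; exact hBx x hx
    · rw [hlam]; exact hs.2
  refine ⟨fun s hs => (main s hs).1, ?_, ?_, ?_⟩
  · -- injectivity
    intro s s' hs hs' hll
    have h1' : ∀ g d, s (g ⊗ₜ[ℤ] d) = s' (g ⊗ₜ[ℤ] d) := by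
      intro g d
      rw [(main s hs).2 g d, (main s' hs').2 g d, ← hlam, ← hlam, hll]
    have : s.toIntLinearMap = s'.toIntLinearMap := TensorProduct.ext' h1'
    ext z
    exact DFunLike.congr_fun this z
  · -- surjectivity
    intro t ht
    refine ⟨tensorState t D.subtype, ⟨?_, ?_⟩, ?_⟩
    · intro a ha
      rcases ha with ha | ha
      · rw [Set.mem_singleton_iff] at ha
        rw [ha, map_zero]
      · exact (ha t D.subtype ht (subtype_isState D h1)).le
    · rw [tensorState_tmul, ht.2]
      show 1 * (1:ℝ) = 1; ring
    · ext x
      rw [hlam, tensorState_tmul]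
      show t x * (1:ℝ) = t x; ring
  · -- affine
    intro s₁ s₂ s₃ _ _ _ c _ _ hconv g
    rw [hlam, hlam, hlam]
    exact hconv _
end

section
/- Let G be a countable weakly unperforated simple partially ordered abelian group with order unit u. Suppose that for any x₁, x₂, y₁, y₂ ∈ G with x_i strictly less than y_j for all i, j = 1,2 (in the sense that s(x_i) < s(y_j) for all states s), there exist z ∈ G and a real number r > 0 with s(x_i) ≤ r·s(z) ≤ s(y_j) for all states s ∈ S_u(G) and i, j = 1,2. Then G has the rationally Riesz property: for any x₁, x₂, y₁, y₂ with x_i ≤ y_j (i,j=1,2) there exist z ∈ G and positive integers m, n with m·x_i ≤ n·z ≤ m·y_j for all i, j. -/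
/-- Let `G` be a countable weakly unperforated simple partially ordered abelian group
with order unit `u` (weak unperforation taken, via Blackadar 6.8.5, as: if `s x > 0`
for all states `s` then `x ∈ G₊`).  Suppose that for any `x₁, x₂, y₁, y₂ ∈ G` with
`s(xᵢ) < s(yⱼ)` for all states `s` and all `i, j`, there exist `z ∈ G` and a real
`r > 0` with `s(xᵢ) ≤ r·s(z) ≤ s(yⱼ)` for all states `s` and all `i, j`.  Then `G` has
the rationally Riesz property: whenever `xᵢ ≤ yⱼ` for `i, j = 1, 2`, there exist
`z ∈ G` and positive integers `m, n` with `m xᵢ ≤ n z ≤ m yⱼ` for all `i, j`. -/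
theorem stmt_6 {G : Type*} [AddCommGroup G] [Countable G] (P : Set G) (u : G)
    (hP0 : (0 : G) ∈ P) (hPadd : ∀ x ∈ P, ∀ y ∈ P, x + y ∈ P)
    (hPpointed : ∀ x ∈ P, -x ∈ P → x = 0)
    (huP : u ∈ P) (hu : ∀ g : G, ∃ n : ℕ, n • u - g ∈ P)
    -- simplicity: every nonzero positive element is an order unit
    (hsimple : ∀ p ∈ P, p ≠ 0 → ∀ g : G, ∃ n : ℕ, n • p - g ∈ P)
    -- weak unperforation (Blackadar 6.8.5 characterization)
    (hwu : ∀ x : G, (∀ s : G →+ ℝ, IsState P u s → 0 < s x) → x ∈ P)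
    -- hypothesis (4): real interpolation of states
    (h4 : ∀ x₁ x₂ y₁ y₂ : G,
      (∀ s : G →+ ℝ, IsState P u s → s x₁ < s y₁ ∧ s x₁ < s y₂ ∧ s x₂ < s y₁ ∧ s x₂ < s y₂) →
      ∃ (z : G) (r : ℝ), 0 < r ∧ ∀ s : G →+ ℝ, IsState P u s →
        s x₁ ≤ r * s z ∧ s x₂ ≤ r * s z ∧ r * s z ≤ s y₁ ∧ r * s z ≤ s y₂) :
    -- conclusion: rationally Riesz property
    ∀ x₁ x₂ y₁ y₂ : G,
      y₁ - x₁ ∈ P → y₂ - x₁ ∈ P → y₁ - x₂ ∈ P → y₂ - x₂ ∈ P →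
      ∃ (z : G) (m n : ℕ), 0 < m ∧ 0 < n ∧
        n • z - m • x₁ ∈ P ∧ n • z - m • x₂ ∈ P ∧
        m • y₁ - n • z ∈ P ∧ m • y₂ - n • z ∈ P := by
  intro x₁ x₂ y₁ y₂ h11 h21 h12 h22
  classical
  have hsmulP : ∀ k : ℕ, ∀ g ∈ P, k • g ∈ P := by
    intro k
    induction k with
    | zero => intro g hg; simpa using hP0
    | succ k ih => intro g hg; rw [succ_nsmul]; exact hPadd _ (ih g hg) _ hg
  have hmono : ∀ g ∈ P, ∀ a b : ℕ, a ≤ b → a • g - u ∈ P → b • g - u ∈ P := by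
    intro g hg a b hab h
    have hba : (b - a) + a = b := Nat.sub_add_cancel hab
    have he : b • g - u = (b - a) • g + (a • g - u) := by
      rw [← hba, add_nsmul]; rw [hba]; abel
    rw [he]; exact hPadd _ (hsmulP _ _ hg) _ h
  by_cases hdeg : y₁ - x₁ = 0 ∨ y₂ - x₁ = 0 ∨ y₁ - x₂ = 0 ∨ y₂ - x₂ = 0
  · rcases hdeg with h | h | h | h
    · have hy : y₁ = x₁ := by rwa [sub_eq_zero] at h
      refine ⟨x₁, 1, 1, one_pos, one_pos, ?_, ?_, ?_, ?_⟩ <;> simp only [one_smul]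
      · simpa using hP0
      · rw [← hy]; exact h12
      · rw [hy]; simpa using hP0
      · exact h21
    · have hy : y₂ = x₁ := by rwa [sub_eq_zero] at h
      refine ⟨x₁, 1, 1, one_pos, one_pos, ?_, ?_, ?_, ?_⟩ <;> simp only [one_smul]
      · simpa using hP0
      · rw [← hy]; exact h22
      · exact h11
      · rw [hy]; simpa using hP0
    · have hy : y₁ = x₂ := by rwa [sub_eq_zero] at h
      refine ⟨x₂, 1, 1, one_pos, one_pos, ?_, ?_, ?_, ?_⟩ <;> simp only [one_smul]
      · rw [← hy]; exact h11
      · simpa using hP0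
      · rw [hy]; simpa using hP0
      · exact h22
    · have hy : y₂ = x₂ := by rwa [sub_eq_zero] at h
      refine ⟨x₂, 1, 1, one_pos, one_pos, ?_, ?_, ?_, ?_⟩ <;> simp only [one_smul]
      · rw [← hy]; exact h21
      · simpa using hP0
      · exact h12
      · rw [hy]; simpa using hP0
  push_neg at hdeg
  obtain ⟨hd11, hd21, hd12, hd22⟩ := hdeg
  obtain ⟨n11, hn11⟩ := hsimple _ h11 hd11 u
  obtain ⟨n21, hn21⟩ := hsimple _ h21 hd21 u
  obtain ⟨n12, hn12⟩ := hsimple _ h12 hd12 u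
  obtain ⟨n22, hn22⟩ := hsimple _ h22 hd22 u
  obtain ⟨N, hN1, hle11, hle21, hle12, hle22⟩ :
      ∃ N : ℕ, 1 ≤ N ∧ n11 ≤ N ∧ n21 ≤ N ∧ n12 ≤ N ∧ n22 ≤ N :=
    ⟨n11 + n21 + n12 + n22 + 1, by omega, by omega, by omega, by omega, by omega⟩
  have hN11 : N • (y₁ - x₁) - u ∈ P := hmono _ h11 _ _ hle11 hn11
  have hN21 : N • (y₂ - x₁) - u ∈ P := hmono _ h21 _ _ hle21 hn21
  have hN12 : N • (y₁ - x₂) - u ∈ P := hmono _ h12 _ _ hle12 hn12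
  have hN22 : N • (y₂ - x₂) - u ∈ P := hmono _ h22 _ _ hle22 hn22
  -- uniform gap for states
  have hgap : ∀ a b : G, N • (b - a) - u ∈ P → ∀ s : G →+ ℝ, IsState P u s →
      (N : ℝ) * s b - (N : ℝ) * s a ≥ 1 := by
    intro a b hab s hs
    have h0 := hs.1 _ hab
    have : s (N • (b - a) - u) = (N : ℝ) * s b - (N : ℝ) * s a - 1 := by
      rw [map_sub, map_nsmul, map_sub, hs.2, nsmul_eq_mul]; ring
    rw [this] at h0; linarith
  -- apply h4 to shifted elements
  have hstrict : ∀ s : G →+ ℝ, IsState P u s →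
      s ((3 * N) • x₁ + u) < s ((3 * N) • y₁ - u) ∧
      s ((3 * N) • x₁ + u) < s ((3 * N) • y₂ - u) ∧
      s ((3 * N) • x₂ + u) < s ((3 * N) • y₁ - u) ∧
      s ((3 * N) • x₂ + u) < s ((3 * N) • y₂ - u) := by
    intro s hs
    have e : ∀ g : G, s ((3 * N) • g + u) = 3 * (N : ℝ) * s g + 1 := by
      intro g; rw [map_add, map_nsmul, hs.2, nsmul_eq_mul]; push_cast; ring
    have e' : ∀ g : G, s ((3 * N) • g - u) = 3 * (N : ℝ) * s g - 1 := by
      intro g; rw [map_sub, map_nsmul, hs.2, nsmul_eq_mul]; push_cast; ring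
    have g11 := hgap _ _ hN11 s hs
    have g21 := hgap _ _ hN21 s hs
    have g12 := hgap _ _ hN12 s hs
    have g22 := hgap _ _ hN22 s hs
    refine ⟨?_, ?_, ?_, ?_⟩ <;> rw [e, e'] <;> linarith
  obtain ⟨z, r, hr, hrs⟩ := h4 _ _ _ _ hstrict
  -- bound s z
  obtain ⟨k1, hk1⟩ := hu z
  obtain ⟨k2, hk2⟩ := hu (-z)
  obtain ⟨K, hK1n, hk1le, hk2le⟩ : ∃ K : ℕ, 1 ≤ K ∧ k1 ≤ K ∧ k2 ≤ K :=
    ⟨k1 + k2 + 1, by omega, by omega, by omega⟩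
  have hK1 : (1 : ℝ) ≤ K := by exact_mod_cast hK1n
  have hmonoU : ∀ g : G, ∀ a b : ℕ, a ≤ b → a • u - g ∈ P → b • u - g ∈ P := by
    intro g a b hab h
    have hba : (b - a) + a = b := Nat.sub_add_cancel hab
    have he : b • u - g = (b - a) • u + (a • u - g) := by
      rw [← hba, add_nsmul]; rw [hba]; abel
    rw [he]; exact hPadd _ (hsmulP _ _ huP) _ h
  have hKz : K • u - z ∈ P := hmonoU _ _ _ hk1le hk1
  have hKz' : K • u - (-z) ∈ P := hmonoU _ _ _ hk2le hk2
  have hbound : ∀ s : G →+ ℝ, IsState P u s → |s z| ≤ (K : ℝ) := by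
    intro s hs
    have h1 := hs.1 _ hKz
    have h2 := hs.1 _ hKz'
    rw [map_sub, map_nsmul, hs.2, nsmul_eq_mul, mul_one] at h1
    rw [map_sub, map_nsmul, map_neg, hs.2, nsmul_eq_mul, mul_one] at h2
    rw [abs_le]; constructor <;> linarith
  -- pick a rational close to r
  have hε : (0 : ℝ) < min r (1 / (2 * K)) := by
    apply lt_min hr; positivity
  obtain ⟨q, hq1, hq2⟩ := exists_rat_btwn (show r - min r (1 / (2 * K)) < r by linarith)
  have hq0 : (0 : ℝ) < (q : ℝ) := by
    have := min_le_left r (1 / (2 * K)); linarith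
  have hqr : r - 1 / (2 * K) < (q : ℝ) := by
    have := min_le_right r (1 / (2 * K)); linarith
  have hqpos : 0 < q := by exact_mod_cast hq0
  -- strict rational interpolation for each state
  have hkey : ∀ s : G →+ ℝ, IsState P u s →
      3 * (N : ℝ) * s x₁ < (q : ℝ) * s z ∧ 3 * (N : ℝ) * s x₂ < (q : ℝ) * s z ∧
      (q : ℝ) * s z < 3 * (N : ℝ) * s y₁ ∧ (q : ℝ) * s z < 3 * (N : ℝ) * s y₂ := by
    intro s hs
    obtain ⟨i1, i2, i3, i4⟩ := hrs s hs
    have e : ∀ g : G, s ((3 * N) • g + u) = 3 * (N : ℝ) * s g + 1 := by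
      intro g; rw [map_add, map_nsmul, hs.2, nsmul_eq_mul]; push_cast; ring
    have e' : ∀ g : G, s ((3 * N) • g - u) = 3 * (N : ℝ) * s g - 1 := by
      intro g; rw [map_sub, map_nsmul, hs.2, nsmul_eq_mul]; push_cast; ring
    rw [e] at i1 i2; rw [e'] at i3 i4
    have hb := hbound s hs
    rw [abs_le] at hb
    have hd1 : (r - (q : ℝ)) * s z ≤ (r - (q : ℝ)) * K :=
      mul_le_mul_of_nonneg_left hb.2 (by linarith)
    have hd2 : (r - (q : ℝ)) * K < (1 / (2 * K)) * K := by
      apply mul_lt_mul_of_pos_right (by linarith) (by linarith)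
    have hd3 : (1 / (2 * (K : ℝ))) * K = 1 / 2 := by
      field_simp
    have hd4 : (r - (q : ℝ)) * (-(K : ℝ)) ≤ (r - (q : ℝ)) * s z :=
      mul_le_mul_of_nonneg_left hb.1 (by linarith)
    have hd5 : (r - (q : ℝ)) * (-(K : ℝ)) = -((r - (q : ℝ)) * K) := by ring
    have hup : (r - (q : ℝ)) * s z < 1 / 2 := by linarith
    have hlo : -(1 / 2 : ℝ) < (r - (q : ℝ)) * s z := by linarith
    have hsplit : (q : ℝ) * s z = r * s z - (r - (q : ℝ)) * s z := by ring
    refine ⟨by linarith, by linarith, by linarith, by linarith⟩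
  -- assemble integers
  refine ⟨z, 3 * N * q.den, q.num.toNat, by positivity, ?_, ?_, ?_, ?_, ?_⟩
  · have : 0 < q.num := Rat.num_pos.2 hqpos
    omega
  all_goals {
    apply hwu
    intro s hs
    obtain ⟨j1, j2, j3, j4⟩ := hkey s hs
    have hd : (0 : ℝ) < (q.den : ℝ) := by exact_mod_cast q.pos
    have hnum : ((q.num.toNat : ℝ)) = (q : ℝ) * q.den := by
      have h2 : ((q * (q.den : ℚ) : ℚ) : ℝ) = (q : ℝ) * q.den := by push_cast; ring
      have h3 : (q.num.toNat : ℤ) = q.num := Int.toNat_of_nonneg (Rat.num_pos.2 hqpos).le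
      rw [← h2, Rat.mul_den_eq_num]
      exact_mod_cast h3
    simp only [map_sub, map_nsmul, nsmul_eq_mul]
    push_cast
    rw [hnum]
    linarith [mul_pos hd (sub_pos.2 j1), mul_pos hd (sub_pos.2 j2),
      mul_pos hd (sub_pos.2 j3), mul_pos hd (sub_pos.2 j4),
      (by ring : (q.den : ℝ) * ((q : ℝ) * s z - 3 * (N : ℝ) * s x₁) = (q : ℝ) * (q.den : ℝ) * s z - 3 * (N : ℝ) * (q.den : ℝ) * s x₁),
      (by ring : (q.den : ℝ) * ((q : ℝ) * s z - 3 * (N : ℝ) * s x₂) = (q : ℝ) * (q.den : ℝ) * s z - 3 * (N : ℝ) * (q.den : ℝ) * s x₂),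
      (by ring : (q.den : ℝ) * (3 * (N : ℝ) * s y₁ - (q : ℝ) * s z) = 3 * (N : ℝ) * (q.den : ℝ) * s y₁ - (q : ℝ) * (q.den : ℝ) * s z),
      (by ring : (q.den : ℝ) * (3 * (N : ℝ) * s y₂ - (q : ℝ) * s z) = 3 * (N : ℝ) * (q.den : ℝ) * s y₂ - (q : ℝ) * (q.den : ℝ) * s z)]
  }
end

section
/- Let A and B be unital C*-algebras and τ a tracial state on a C*-tensor product A ⊗ B. If the restriction of τ to 1 ⊗ B is an extreme point of the tracial state space of B, then τ(a ⊗ b) = τ(a ⊗ 1)·τ(1 ⊗ b) for all a ∈ A and b ∈ B. -/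
open scoped ComplexOrder

/-- A tracial state on a unital C*-algebra: a positive normalized linear functional
with the trace property. -/
def IsTracialState {A : Type*} [NormedRing A] [StarRing A] [NormedAlgebra ℂ A]
    (τ : A →ₗ[ℂ] ℂ) : Prop :=
  τ 1 = 1 ∧ (∀ a : A, 0 ≤ τ (star a * a)) ∧ ∀ a b : A, τ (a * b) = τ (b * a)

/-- A tracial state is extremal if it is an extreme point of the tracial state space:
any way of writing it as a proper convex combination of tracial states is trivial. -/
def IsExtremeTracialState {A : Type*} [NormedRing A] [StarRing A] [NormedAlgebra ℂ A]
    (τ : A →ₗ[ℂ] ℂ) : Prop :=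
  IsTracialState τ ∧ ∀ τ₁ τ₂ : A →ₗ[ℂ] ℂ, IsTracialState τ₁ → IsTracialState τ₂ →
    ∀ c : ℝ, 0 < c → c < 1 →
      (∀ x : A, τ x = (c : ℂ) * τ₁ x + ((1 : ℂ) - c) * τ₂ x) → τ₁ = τ₂

/-! For `0 ≤ a ≤ 1` in `A`, the functionals `b ↦ τ (ιA a * ιB b)` and `b ↦ τ (ιA (1 - a) * ιB b)`
are positive traces on `B` (because `ιA a` commutes with `ιB B`) summing to the restriction `σ` of
`τ`. An extreme tracial state dominates only its own multiples, so the first one is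
`τ (ιA a) • σ`; in the degenerate cases `τ (ιA a) ∈ {0, 1}` one of the two summands is a positive
functional vanishing at `1`, hence zero. Positive contractions span `A`. -/

def IsPositiveTrace {B : Type*} [Ring B] [StarRing B] [Module ℂ B] (φ : B →ₗ[ℂ] ℂ) : Prop :=
  (∀ b : B, 0 ≤ φ (star b * b)) ∧ ∀ a b : B, φ (a * b) = φ (b * a)

lemma IsPositiveTrace.map_one_nonneg {B : Type*} [Ring B] [StarRing B] [Module ℂ B]
    {φ : B →ₗ[ℂ] ℂ} (hφ : IsPositiveTrace φ) : 0 ≤ φ 1 := by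
  simpa using hφ.1 1

section Normalize

variable {B : Type*} [NormedRing B] [StarRing B] [NormedAlgebra ℂ B] {φ : B →ₗ[ℂ] ℂ}

lemma IsPositiveTrace.isTracialState_inv_smul (hφ : IsPositiveTrace φ) (h1 : φ 1 ≠ 0) :
    IsTracialState ((φ 1)⁻¹ • φ) := by
  refine ⟨by simp [h1], fun b ↦ ?_, fun a b ↦ by simp [hφ.2 a b]⟩
  exact mul_nonneg (inv_nonneg_of_nonneg hφ.map_one_nonneg) (hφ.1 b)

end Normalize

section Extreme

variable {B : Type*} [CStarAlgebra B] [PartialOrder B] [StarOrderedRing B] {φ σ : B →ₗ[ℂ] ℂ}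

lemma eq_zero_of_nonneg_of_map_one_eq_zero (hφ : ∀ b : B, 0 ≤ φ (star b * b)) (h1 : φ 1 = 0) :
    φ = 0 := by
  let f : B →ₚ[ℂ] ℂ := .mk₀ φ fun x hx ↦ by
    obtain ⟨y, rfl⟩ := CStarAlgebra.nonneg_iff_eq_star_mul_self.mp hx
    exact hφ y
  refine LinearMap.ext_on CStarAlgebra.span_nonneg fun x (hx : 0 ≤ x) ↦ ?_
  have : ‖φ x‖ ≤ ‖φ 1‖ * ‖x‖ := f.norm_apply_le_of_nonneg x hx
  simpa [h1] using this

lemma IsExtremeTracialState.eq_map_one_smul (hσ : IsExtremeTracialState σ)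
    (hφ : IsPositiveTrace φ) (hψ : IsPositiveTrace (σ - φ)) : φ = φ 1 • σ := by
  obtain ⟨⟨hσ1, -, -⟩, hext⟩ := hσ
  obtain ⟨r, hr0, hr⟩ := RCLike.nonneg_iff_exists_ofReal.mp hφ.map_one_nonneg
  rw [RCLike.ofReal_eq_complex_ofReal] at hr
  have hψ1 : (σ - φ) 1 = ((1 - r : ℝ) : ℂ) := by simp [hσ1, ← hr]
  rw [← hr]
  rcases hr0.eq_or_lt with rfl | hr_pos
  · simpa using eq_zero_of_nonneg_of_map_one_eq_zero hφ.1 (by simpa using hr.symm)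
  have hr_le : r ≤ 1 := by
    have := hψ.map_one_nonneg
    rw [hψ1, Complex.zero_le_real] at this
    linarith
  rcases hr_le.eq_or_lt with rfl | hr_lt
  · have := eq_zero_of_nonneg_of_map_one_eq_zero hψ.1 (by simp [hψ1])
    simpa [sub_eq_zero, eq_comm] using this
  have hr_ne : (r : ℂ) ≠ 0 := by exact_mod_cast hr_pos.ne'
  have hr_ne' : (1 : ℂ) - r ≠ 0 := by exact_mod_cast (sub_pos.mpr hr_lt).ne'
  have key := hext _ _ (hφ.isTracialState_inv_smul (hr ▸ hr_ne))
    (hψ.isTracialState_inv_smul (by rwa [hψ1, Complex.ofReal_sub, Complex.ofReal_one]))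
    r hr_pos hr_lt fun x ↦ by
      simp only [LinearMap.smul_apply, LinearMap.sub_apply, smul_eq_mul, hψ1, ← hr]
      push_cast
      field_simp
      ring
  ext x
  have := LinearMap.congr_fun key x
  simp only [LinearMap.smul_apply, LinearMap.sub_apply, smul_eq_mul, hψ1, ← hr] at this
  push_cast at this
  field_simp at this
  simp only [LinearMap.smul_apply, smul_eq_mul]
  linear_combination this

end Extreme

section WeightedRestriction

variable {B C : Type*} [Ring B] [StarRing B] [Algebra ℂ B] [Ring C] [StarRing C] [Algebra ℂ C]
  {τ : C →ₗ[ℂ] ℂ} {ι : B →⋆ₐ[ℂ] C}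

def weightedRestriction (τ : C →ₗ[ℂ] ℂ) (ι : B →⋆ₐ[ℂ] C) (x : C) : B →ₗ[ℂ] ℂ :=
  τ ∘ₗ LinearMap.mulLeft ℂ x ∘ₗ ι.toAlgHom.toLinearMap

@[simp]
lemma weightedRestriction_apply (x : C) (b : B) : weightedRestriction τ ι x b = τ (x * ι b) :=
  rfl

lemma weightedRestriction_one : weightedRestriction τ ι 1 = τ ∘ₗ ι.toAlgHom.toLinearMap := by
  ext; simp

lemma weightedRestriction_sub (x y : C) :
    weightedRestriction τ ι (x - y) = weightedRestriction τ ι x - weightedRestriction τ ι y := by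
  ext; simp [sub_mul]

lemma IsPositiveTrace.weightedRestriction_star_mul_self (hτ : IsPositiveTrace τ) (y : C)
    (hy : ∀ b, Commute (star y * y) (ι b)) :
    IsPositiveTrace (weightedRestriction τ ι (star y * y)) := by
  refine ⟨fun b ↦ ?_, fun b₁ b₂ ↦ ?_⟩
  · calc (0 : ℂ) ≤ τ (star (ι b * star y) * (ι b * star y)) := hτ.1 _
      _ = τ (y * star (ι b) * ι b * star y) := by rw [star_mul, star_star]; simp only [mul_assoc]
      _ = τ (star y * (y * star (ι b) * ι b)) := hτ.2 _ _
      _ = τ (star y * y * ι (star b * b)) := by rw [map_mul ι, map_star ι]; simp only [mul_assoc]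
  · calc τ (star y * y * ι (b₁ * b₂)) = τ (star y * y * ι b₁ * ι b₂) := by
          rw [map_mul ι, ← mul_assoc]
      _ = τ (ι b₂ * (star y * y * ι b₁)) := hτ.2 _ _
      _ = τ (star y * y * (ι b₂ * ι b₁)) := by rw [← mul_assoc, ← (hy b₂).eq, mul_assoc]
      _ = τ (star y * y * ι (b₂ * b₁)) := by rw [map_mul ι]

end WeightedRestriction

section Product

variable {A B C : Type*} [CStarAlgebra A] [PartialOrder A] [StarOrderedRing A]
  [CStarAlgebra B] [Ring C] [StarRing C] [Algebra ℂ C]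
  {ιA : A →⋆ₐ[ℂ] C} {ιB : B →⋆ₐ[ℂ] C} {τ : C →ₗ[ℂ] ℂ}

lemma IsPositiveTrace.weightedRestriction_of_nonneg (hτ : IsPositiveTrace τ)
    (hcomm : ∀ a b, Commute (ιA a) (ιB b)) {a : A} (ha : 0 ≤ a) :
    IsPositiveTrace (weightedRestriction τ ιB (ιA a)) := by
  obtain ⟨s, rfl⟩ := CStarAlgebra.nonneg_iff_eq_star_mul_self.mp ha
  rw [map_mul, map_star]
  exact hτ.weightedRestriction_star_mul_self _ fun b ↦ by
    simpa [map_mul, map_star] using hcomm (star s * s) b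

variable [PartialOrder B] [StarOrderedRing B]

lemma map_mul_eq_mul_of_nonneg_of_le_one (hτ : IsPositiveTrace τ)
    (hcomm : ∀ a b, Commute (ιA a) (ιB b))
    (hres : IsExtremeTracialState (τ ∘ₗ ιB.toAlgHom.toLinearMap)) {a : A} (ha₀ : 0 ≤ a)
    (ha₁ : a ≤ 1) (b : B) : τ (ιA a * ιB b) = τ (ιA a) * τ (ιB b) := by
  have hrest : IsPositiveTrace
      (τ ∘ₗ ιB.toAlgHom.toLinearMap - weightedRestriction τ ιB (ιA a)) := by
    rw [← weightedRestriction_one, ← weightedRestriction_sub, ← map_one ιA, ← map_sub]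
    exact hτ.weightedRestriction_of_nonneg hcomm (sub_nonneg.mpr ha₁)
  have := LinearMap.congr_fun
    (hres.eq_map_one_smul (hτ.weightedRestriction_of_nonneg hcomm ha₀) hrest) b
  simpa using this

theorem map_mul_eq_mul_of_isExtremeTracialState (hτ : IsPositiveTrace τ)
    (hcomm : ∀ a b, Commute (ιA a) (ιB b))
    (hres : IsExtremeTracialState (τ ∘ₗ ιB.toAlgHom.toLinearMap)) (a : A) (b : B) :
    τ (ιA a * ιB b) = τ (ιA a) * τ (ιB b) := by
  have key := LinearMap.ext_on (f := τ ∘ₗ LinearMap.mulRight ℂ (ιB b) ∘ₗ ιA.toAlgHom.toLinearMap)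
    (g := τ (ιB b) • τ ∘ₗ ιA.toAlgHom.toLinearMap) CStarAlgebra.span_nonneg_inter_unitClosedBall
    fun x ⟨(hx₀ : 0 ≤ x), hx₁⟩ ↦ by
      have hx₁ : x ≤ 1 := (CStarAlgebra.norm_le_one_iff_of_nonneg x hx₀).mp
        (mem_closedBall_zero_iff.mp hx₁)
      simpa [mul_comm] using map_mul_eq_mul_of_nonneg_of_le_one hτ hcomm hres hx₀ hx₁ b
  simpa [mul_comm] using LinearMap.congr_fun key a

end Product

theorem stmt_8_general {A B C : Type*}
    [NormedRing A] [StarRing A] [CStarRing A] [NormedAlgebra ℂ A] [StarModule ℂ A]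
    [CompleteSpace A]
    [NormedRing B] [StarRing B] [CStarRing B] [NormedAlgebra ℂ B] [StarModule ℂ B]
    [CompleteSpace B]
    [NormedRing C] [StarRing C] [NormedAlgebra ℂ C]
    (ιA : A →⋆ₐ[ℂ] C) (ιB : B →⋆ₐ[ℂ] C)
    (hcomm : ∀ (a : A) (b : B), ιA a * ιB b = ιB b * ιA a)
    (τ : C →ₗ[ℂ] ℂ) (hτ : IsTracialState τ)
    (hres : IsExtremeTracialState (τ ∘ₗ ιB.toAlgHom.toLinearMap)) :
    ∀ (a : A) (b : B), τ (ιA a * ιB b) = τ (ιA a) * τ (ιB b) := by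
  let _ : CStarAlgebra A := { }
  let _ : CStarAlgebra B := { }
  let _ := CStarAlgebra.spectralOrder A
  let _ := CStarAlgebra.spectralOrderedRing A
  let _ := CStarAlgebra.spectralOrder B
  let _ := CStarAlgebra.spectralOrderedRing B
  exact map_mul_eq_mul_of_isExtremeTracialState hτ.2 hcomm hres

/-- Let `A`, `B` be unital C*-algebras and `τ` a tracial state on a C*-tensor product
`C = A ⊗ B` (realized by commuting unital embeddings `ιA, ιB` with dense joint span).
If the restriction of `τ` to `1 ⊗ B` is an extreme tracial state of `B`, then
`τ(a ⊗ b) = τ(a ⊗ 1) · τ(1 ⊗ b)` for all `a ∈ A`, `b ∈ B`. -/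
theorem stmt_8 {A B C : Type*}
    [NormedRing A] [StarRing A] [CStarRing A] [NormedAlgebra ℂ A] [StarModule ℂ A]
    [CompleteSpace A]
    [NormedRing B] [StarRing B] [CStarRing B] [NormedAlgebra ℂ B] [StarModule ℂ B]
    [CompleteSpace B]
    [NormedRing C] [StarRing C] [CStarRing C] [NormedAlgebra ℂ C] [StarModule ℂ C]
    [CompleteSpace C]
    (ιA : A →⋆ₐ[ℂ] C) (ιB : B →⋆ₐ[ℂ] C)
    (hcomm : ∀ (a : A) (b : B), ιA a * ιB b = ιB b * ιA a)
    (hdense : Dense (↑(Submodule.span ℂ {x : C | ∃ (a : A) (b : B), x = ιA a * ιB b}) : Set C))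
    (τ : C →ₗ[ℂ] ℂ) (hτ : IsTracialState τ)
    (hres : IsExtremeTracialState (τ ∘ₗ ιB.toAlgHom.toLinearMap)) :
    ∀ (a : A) (b : B), τ (ιA a * ιB b) = τ (ιA a) * τ (ιB b) :=
  stmt_8_general ιA ιB hcomm τ hτ hres
end
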